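/- For t > 0, define u_4^0(t,y) = −(2y²/ (t²−y²)^{3/2}) (I_1(√(t²−y²)) + J_1(√(t²−y²))) + (t²/(t²−y²)) (I_0 + I_2 + J_0 − J_2)(√(t²−y²)) − (I_0 + J_0)(√(t²−y²)) on |y| < t. Then ∫_{−t}^{t} u_4^0(t,y) dy = 2 sinh t + 2 sin t − 4t. -/

import Mathlib

/-!
With `K = t² - y²` and `r = √K`, the combinations `I₀ + J₀`, `(I₁ + J₁) / r` and
`(I₂ - J₂) / K` at `r` are power series in `K` in which every other coefficient vanishes.
Substituting them, the `k = 0` terms of the two parts singular at `y = ±t` cancel, and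
`u₄⁰(t, y) = ∑ₙ (1 - (-1)ⁿ) / (4ⁿ⁺¹ n! (n+2)!) · (t² + y²)(t² - y²)ⁿ`.
The Wallis-type integrals `∫₋ₜᵗ (t² - y²)ᵐ dy = 2·4ᵐ m!² t²ᵐ⁺¹ / (2m+1)!` turn the `n`-th
term into `2 (1 - (-1)ⁿ) t²ⁿ⁺³ / (2n+3)!`, the terms of `2 sinh t + 2 sin t` beyond the linear
one; termwise integration is justified by dominated convergence with the bound
`4 t² (t²)ⁿ / n!`.
-/

open Real

/-- Modified Bessel function of the first kind, order 0. -/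
noncomputable def besselI0 (r : ℝ) : ℝ :=
  ∑' k : ℕ, (r / 2) ^ (2 * k) / ((Nat.factorial k : ℝ)) ^ 2

/-- Bessel function of the first kind, order 0. -/
noncomputable def besselJ0 (r : ℝ) : ℝ :=
  ∑' k : ℕ, (-1 : ℝ) ^ k * (r / 2) ^ (2 * k) / ((Nat.factorial k : ℝ)) ^ 2

/-- Modified Bessel function of the first kind, order 1. -/
noncomputable def besselI1 (r : ℝ) : ℝ :=
  ∑' k : ℕ, (r / 2) ^ (2 * k + 1) / ((Nat.factorial k : ℝ) * (Nat.factorial (k + 1)))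

/-- Bessel function of the first kind, order 1. -/
noncomputable def besselJ1 (r : ℝ) : ℝ :=
  ∑' k : ℕ, (-1 : ℝ) ^ k * (r / 2) ^ (2 * k + 1) / ((Nat.factorial k : ℝ) * (Nat.factorial (k + 1)))

/-- Modified Bessel function of the first kind, order 2. -/
noncomputable def besselI2 (r : ℝ) : ℝ :=
  ∑' k : ℕ, (r / 2) ^ (2 * k + 2) / ((Nat.factorial k : ℝ) * (Nat.factorial (k + 2)))

/-- Bessel function of the first kind, order 2. -/
noncomputable def besselJ2 (r : ℝ) : ℝ :=
  ∑' k : ℕ, (-1 : ℝ) ^ k * (r / 2) ^ (2 * k + 2) / ((Nat.factorial k : ℝ) * (Nat.factorial (k + 2)))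

open MeasureTheory
open scoped Nat

lemma summable_of_abs_le_mul_pow_div_factorial {f : ℕ → ℝ} (C x : ℝ)
    (h : ∀ k, |f k| ≤ C * x ^ k / k !) : Summable f :=
  .of_norm_bounded ((Real.summable_pow_div_factorial x).mul_left C) fun k => by
    simpa only [Real.norm_eq_abs, mul_div_assoc] using h k

lemma summable_mul_pow_div_factorial_mul_factorial (x : ℝ) (a m : ℕ) {σ : ℕ → ℝ}
    (hσ : ∀ k, |σ k| ≤ 1) :
    Summable fun k : ℕ => σ k * x ^ (2 * k + a) / (k ! * (k + m)! : ℝ) := by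
  refine summable_of_abs_le_mul_pow_div_factorial (|x| ^ a) (x ^ 2) fun k => ?_
  have hkm : (1 : ℝ) ≤ (k + m)! := mod_cast (k + m).factorial_pos
  have hd : (0 : ℝ) < k ! * (k + m)! := by positivity
  calc |σ k * x ^ (2 * k + a) / (k ! * (k + m)! : ℝ)|
      = |σ k| * (|x| ^ a * (x ^ 2) ^ k) / (k ! * (k + m)!) := by
        rw [abs_div, abs_mul, abs_of_pos hd, pow_add, pow_mul, abs_mul, abs_pow,
          abs_of_nonneg (sq_nonneg x), abs_pow]
        ring
    _ ≤ 1 * (|x| ^ a * (x ^ 2) ^ k) / (k ! * 1) := by gcongr; exact hσ k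
    _ = |x| ^ a * (x ^ 2) ^ k / k ! := by ring

lemma div_two_pow_two_mul (r : ℝ) (k : ℕ) : (r / 2) ^ (2 * k) = (r ^ 2) ^ k / 4 ^ k := by
  rw [pow_mul, div_pow, div_pow]; norm_num

lemma hasSum_besselI0_add_besselJ0 (r : ℝ) :
    HasSum (fun k : ℕ => (1 + (-1) ^ k) / (4 ^ k * (k ! : ℝ) ^ 2) * (r ^ 2) ^ k)
      (besselI0 r + besselJ0 r) := by
  have hI : HasSum (fun k : ℕ => (r / 2) ^ (2 * k) / (k ! : ℝ) ^ 2) (besselI0 r) :=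
    Summable.hasSum <| by
      simpa [sq] using
        summable_mul_pow_div_factorial_mul_factorial (r / 2) 0 0 (σ := 1) fun _ => by simp
  have hJ : HasSum (fun k : ℕ => (-1) ^ k * (r / 2) ^ (2 * k) / (k ! : ℝ) ^ 2) (besselJ0 r) :=
    Summable.hasSum <| by
      simpa [sq] using summable_mul_pow_div_factorial_mul_factorial (r / 2) 0 0
        (σ := fun k => (-1) ^ k) fun _ => by simp
  refine (hI.add hJ).congr_fun fun k => ?_
  rw [div_two_pow_two_mul]
  field_simp

lemma hasSum_besselI1_add_besselJ1 (r : ℝ) :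
    HasSum (fun k : ℕ => r * ((1 + (-1) ^ k) / (2 * 4 ^ k * k ! * (k + 1)!) * (r ^ 2) ^ k))
      (besselI1 r + besselJ1 r) := by
  have hI : HasSum (fun k : ℕ => (r / 2) ^ (2 * k + 1) / (k ! * (k + 1)! : ℝ)) (besselI1 r) :=
    Summable.hasSum <| by
      simpa using
        summable_mul_pow_div_factorial_mul_factorial (r / 2) 1 1 (σ := 1) fun _ => by simp
  have hJ : HasSum (fun k : ℕ => (-1) ^ k * (r / 2) ^ (2 * k + 1) / (k ! * (k + 1)! : ℝ))
      (besselJ1 r) :=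
    Summable.hasSum <| summable_mul_pow_div_factorial_mul_factorial (r / 2) 1 1
      (σ := fun k => (-1) ^ k) fun _ => by simp
  refine (hI.add hJ).congr_fun fun k => ?_
  rw [pow_succ (r / 2), div_two_pow_two_mul]
  field_simp

lemma hasSum_besselI2_sub_besselJ2 (r : ℝ) :
    HasSum (fun k : ℕ => r ^ 2 * ((1 - (-1) ^ k) / (4 ^ (k + 1) * k ! * (k + 2)!) * (r ^ 2) ^ k))
      (besselI2 r - besselJ2 r) := by
  have hI : HasSum (fun k : ℕ => (r / 2) ^ (2 * k + 2) / (k ! * (k + 2)! : ℝ)) (besselI2 r) :=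
    Summable.hasSum <| by
      simpa using
        summable_mul_pow_div_factorial_mul_factorial (r / 2) 2 2 (σ := 1) fun _ => by simp
  have hJ : HasSum (fun k : ℕ => (-1) ^ k * (r / 2) ^ (2 * k + 2) / (k ! * (k + 2)! : ℝ))
      (besselJ2 r) :=
    Summable.hasSum <| summable_mul_pow_div_factorial_mul_factorial (r / 2) 2 2
      (σ := fun k => (-1) ^ k) fun _ => by simp
  refine (hI.sub hJ).congr_fun fun k => ?_
  rw [pow_add (r / 2), div_two_pow_two_mul]
  field_simp
  ring

noncomputable def u40 (t y : ℝ) : ℝ :=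
  -(2 * y ^ 2 / (t ^ 2 - y ^ 2) ^ ((3 : ℝ) / 2)) *
      (besselI1 (Real.sqrt (t ^ 2 - y ^ 2)) + besselJ1 (Real.sqrt (t ^ 2 - y ^ 2))) +
    t ^ 2 / (t ^ 2 - y ^ 2) *
      (besselI0 (Real.sqrt (t ^ 2 - y ^ 2)) + besselI2 (Real.sqrt (t ^ 2 - y ^ 2)) +
        besselJ0 (Real.sqrt (t ^ 2 - y ^ 2)) - besselJ2 (Real.sqrt (t ^ 2 - y ^ 2))) -
    (besselI0 (Real.sqrt (t ^ 2 - y ^ 2)) + besselJ0 (Real.sqrt (t ^ 2 - y ^ 2)))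

noncomputable def u40Term (t : ℝ) (n : ℕ) (y : ℝ) : ℝ :=
  (1 - (-1) ^ n) / (4 ^ (n + 1) * n ! * (n + 2)!) * ((t ^ 2 + y ^ 2) * (t ^ 2 - y ^ 2) ^ n)

lemma hasSum_u40Term {t y : ℝ} (hy : y ^ 2 < t ^ 2) :
    HasSum (fun n => u40Term t n y) (u40 t y) := by
  unfold u40 u40Term
  set K := t ^ 2 - y ^ 2
  set r := √K
  have hK : 0 < K := sub_pos.mpr hy
  have hr : r ≠ 0 := (Real.sqrt_pos.mpr hK).ne'
  have hr2 : r ^ 2 = K := Real.sq_sqrt hK.le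
  have hK32 : K ^ ((3 : ℝ) / 2) = K * r := by
    rw [show (3 : ℝ) / 2 = 1 + 1 / 2 by norm_num, Real.rpow_add hK, Real.rpow_one,
      ← Real.sqrt_eq_rpow]
  have h0 := hasSum_besselI0_add_besselJ0 r
  have h1 := hasSum_besselI1_add_besselJ1 r
  have h2 := hasSum_besselI2_sub_besselJ2 r
  rw [hr2] at h0 h1 h2
  have hsing := (h1.mul_left (-(2 * y ^ 2 / (K * r)))).add (h0.mul_left (t ^ 2 / K - 1))
  -- the `k = 0` terms of the two series singular at `y = ±t` cancel
  have hsing' := (hasSum_nat_add_iff' 1).mpr hsing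
  convert hsing'.add (h2.mul_left (t ^ 2 / K)) using 1
  · rfl
  · funext n
    simp only [Nat.factorial_succ, pow_succ (-1 : ℝ)]
    push_cast
    field_simp
    ring
  · simp only [hK32, Finset.sum_range_one, pow_zero, mul_one, Nat.factorial_zero, Nat.cast_one,
      zero_add, Nat.factorial_one, one_pow, div_one]
    field_simp
    ring

lemma integral_sq_sub_sq_pow_succ (t : ℝ) (m : ℕ) :
    (2 * m + 3) * ∫ y in -t..t, (t ^ 2 - y ^ 2) ^ (m + 1) =
      2 * (m + 1) * t ^ 2 * ∫ y in -t..t, (t ^ 2 - y ^ 2) ^ m := by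
  have hderiv (y : ℝ) : HasDerivAt (fun y => y * (t ^ 2 - y ^ 2) ^ (m + 1))
      ((2 * m + 3) * (t ^ 2 - y ^ 2) ^ (m + 1) - 2 * (m + 1) * t ^ 2 * (t ^ 2 - y ^ 2) ^ m) y :=
    ((hasDerivAt_id' y).fun_mul
        (((hasDerivAt_pow 2 y).const_sub (t ^ 2)).fun_pow (m + 1))).congr_deriv
      (by simp only [Nat.add_sub_cancel]; push_cast; ring)
  have hFTC : ∫ y in -t..t, ((2 * m + 3) * (t ^ 2 - y ^ 2) ^ (m + 1) -
      2 * (m + 1) * t ^ 2 * (t ^ 2 - y ^ 2) ^ m) = 0 := by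
    rw [intervalIntegral.integral_eq_sub_of_hasDerivAt (fun y _ => hderiv y)
      (Continuous.intervalIntegrable (by fun_prop) _ _)]
    simp
  rw [intervalIntegral.integral_sub (Continuous.intervalIntegrable (by fun_prop) _ _)
    (Continuous.intervalIntegrable (by fun_prop) _ _), intervalIntegral.integral_const_mul,
    intervalIntegral.integral_const_mul] at hFTC
  linarith

lemma integral_sq_sub_sq_pow (t : ℝ) (m : ℕ) :
    ∫ y in -t..t, (t ^ 2 - y ^ 2) ^ m =
      2 * 4 ^ m * (m ! : ℝ) ^ 2 * t ^ (2 * m + 1) / (2 * m + 1)! := by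
  induction m with
  | zero =>
    simp only [pow_zero, intervalIntegral.integral_const, sub_neg_eq_add, smul_eq_mul, mul_one,
      Nat.factorial_zero, Nat.cast_one, one_pow, mul_zero, zero_add, pow_one]
    ring
  | succ m ih =>
    have h := integral_sq_sub_sq_pow_succ t m
    rw [ih] at h
    refine mul_left_cancel₀ (by positivity : (2 * m + 3 : ℝ) ≠ 0) (h.trans ?_)
    rw [show 2 * (m + 1) + 1 = 2 * m + 1 + 1 + 1 by ring]
    simp only [Nat.factorial_succ]
    push_cast
    field_simp
    ring

lemma integral_u40Term (t : ℝ) (n : ℕ) :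
    ∫ y in -t..t, u40Term t n y = 2 * (1 - (-1) ^ n) * t ^ (2 * n + 3) / (2 * n + 3)! := by
  have hsplit : ∫ y in -t..t, (t ^ 2 + y ^ 2) * (t ^ 2 - y ^ 2) ^ n =
      2 * t ^ 2 * (∫ y in -t..t, (t ^ 2 - y ^ 2) ^ n) -
        ∫ y in -t..t, (t ^ 2 - y ^ 2) ^ (n + 1) := by
    rw [← intervalIntegral.integral_const_mul, ← intervalIntegral.integral_sub
      (Continuous.intervalIntegrable (by fun_prop) _ _)
      (Continuous.intervalIntegrable (by fun_prop) _ _)]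
    congr 1 with y
    ring
  simp only [u40Term, intervalIntegral.integral_const_mul, hsplit, integral_sq_sub_sq_pow]
  rw [show 2 * (n + 1) + 1 = 2 * n + 1 + 1 + 1 by ring, show 2 * n + 3 = 2 * n + 1 + 1 + 1 by ring]
  simp only [Nat.factorial_succ]
  push_cast
  field_simp
  ring

lemma abs_u40Term_le {t y : ℝ} (hy : y ^ 2 ≤ t ^ 2) (n : ℕ) :
    |u40Term t n y| ≤ 4 * t ^ 2 * ((t ^ 2) ^ n / n !) := by
  have hcoeff : |(1 - (-1) ^ n) / (4 ^ (n + 1) * n ! * (n + 2)! : ℝ)| ≤ 2 / n ! := by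
    have hnum : |1 - (-1 : ℝ) ^ n| ≤ 2 := by
      rcases neg_one_pow_eq_or ℝ n with h | h <;> norm_num [h]
    have hden : (n ! : ℝ) ≤ 4 ^ (n + 1) * n ! * (n + 2)! := by
      have h4 : (1 : ℝ) ≤ 4 ^ (n + 1) := one_le_pow₀ (by norm_num)
      have hf : (1 : ℝ) ≤ (n + 2)! := mod_cast (n + 2).factorial_pos
      calc (n ! : ℝ) = 1 * n ! * 1 := by ring
        _ ≤ 4 ^ (n + 1) * n ! * (n + 2)! := by gcongr
    rw [abs_div, abs_of_pos (by positivity : (0 : ℝ) < 4 ^ (n + 1) * n ! * (n + 2)!)]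
    exact div_le_div₀ zero_le_two hnum (by positivity) hden
  have hpoly : |(t ^ 2 + y ^ 2) * (t ^ 2 - y ^ 2) ^ n| ≤ 2 * t ^ 2 * (t ^ 2) ^ n := by
    have hK : 0 ≤ t ^ 2 - y ^ 2 := sub_nonneg.mpr hy
    rw [abs_of_nonneg (by positivity)]
    gcongr
    · linarith
    · linarith [sq_nonneg y]
  rw [u40Term, abs_mul]
  calc _ ≤ 2 / n ! * (2 * t ^ 2 * (t ^ 2) ^ n) :=
        mul_le_mul hcoeff hpoly (abs_nonneg _) (by positivity)
    _ = 4 * t ^ 2 * ((t ^ 2) ^ n / n !) := by ring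

lemma hasSum_two_sinh_add_two_sin_sub (t : ℝ) :
    HasSum (fun n : ℕ => 2 * (1 - (-1) ^ n) * t ^ (2 * n + 3) / (2 * n + 3)!)
      (2 * Real.sinh t + 2 * Real.sin t - 4 * t) := by
  have h := ((Real.hasSum_sinh t).mul_left 2).add ((Real.hasSum_sin t).mul_left 2)
  convert (hasSum_nat_add_iff' 1).mpr h using 1
  · rfl
  · funext n
    rw [show 2 * (n + 1) + 1 = 2 * n + 3 by ring, pow_succ (-1 : ℝ)]
    ring
  · simp only [Finset.sum_range_one, pow_zero, mul_zero, zero_add, pow_one, Nat.factorial_one,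
      Nat.cast_one, div_one, one_mul]
    ring

lemma sq_le_sq_of_mem_uIoc_neg {t y : ℝ} (hy : y ∈ Set.uIoc (-t) t) : y ^ 2 ≤ t ^ 2 := by
  rcases Set.mem_uIoc.mp hy with h | h <;> nlinarith [h.1, h.2]

lemma sq_lt_sq_of_mem_uIoc_neg {t y : ℝ} (hy : y ∈ Set.uIoc (-t) t) (h₁ : y ≠ t)
    (h₂ : y ≠ -t) : y ^ 2 < t ^ 2 := by
  rcases Set.mem_uIoc.mp hy with h | h
  · nlinarith [h.1, lt_of_le_of_ne h.2 h₁]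
  · nlinarith [h.1, lt_of_le_of_ne h.2 h₂]

theorem integral_u40_general (t : ℝ) :
    (∫ y in (-t)..t,
        -(2 * y ^ 2 / (t ^ 2 - y ^ 2) ^ ((3 : ℝ) / 2)) *
            (besselI1 (Real.sqrt (t ^ 2 - y ^ 2)) + besselJ1 (Real.sqrt (t ^ 2 - y ^ 2))) +
          t ^ 2 / (t ^ 2 - y ^ 2) *
            (besselI0 (Real.sqrt (t ^ 2 - y ^ 2)) + besselI2 (Real.sqrt (t ^ 2 - y ^ 2)) +
              besselJ0 (Real.sqrt (t ^ 2 - y ^ 2)) - besselJ2 (Real.sqrt (t ^ 2 - y ^ 2))) -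
          (besselI0 (Real.sqrt (t ^ 2 - y ^ 2)) + besselJ0 (Real.sqrt (t ^ 2 - y ^ 2)))) =
      2 * Real.sinh t + 2 * Real.sin t - 4 * t := by
  have hseries : HasSum (fun n => ∫ y in -t..t, u40Term t n y)
      (2 * Real.sinh t + 2 * Real.sin t - 4 * t) := by
    simpa only [integral_u40Term] using hasSum_two_sinh_add_two_sin_sub t
  refine HasSum.unique ?_ hseries
  refine intervalIntegral.hasSum_integral_of_dominated_convergence
    (fun n _ => 4 * t ^ 2 * ((t ^ 2) ^ n / n !))
    (fun n => (by unfold u40Term; fun_prop : Continuous (u40Term t n)).aestronglyMeasurable)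
    (fun n => .of_forall fun y hy => abs_u40Term_le (sq_le_sq_of_mem_uIoc_neg hy) n)
    (.of_forall fun _ _ => (Real.summable_pow_div_factorial _).mul_left _)
    intervalIntegrable_const ?_
  filter_upwards [volume.ae_ne t, volume.ae_ne (-t)] with y h₁ h₂ hy
  exact hasSum_u40Term (sq_lt_sq_of_mem_uIoc_neg hy h₁ h₂)

/-- `∫₋ₜᵗ u₄⁰(t,y) dy = 2 sinh t + 2 sin t − 4t` where
`u₄⁰(t,y) = −(2y²/(t²−y²)^{3/2})(I₁+J₁) + (t²/(t²−y²))(I₀+I₂+J₀−J₂) − (I₀+J₀)`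
evaluated at `√(t²−y²)`. -/
theorem integral_u40 (t : ℝ) (ht : 0 < t) :
    (∫ y in (-t)..t,
        -(2 * y ^ 2 / (t ^ 2 - y ^ 2) ^ ((3 : ℝ) / 2)) *
            (besselI1 (Real.sqrt (t ^ 2 - y ^ 2)) + besselJ1 (Real.sqrt (t ^ 2 - y ^ 2))) +
          t ^ 2 / (t ^ 2 - y ^ 2) *
            (besselI0 (Real.sqrt (t ^ 2 - y ^ 2)) + besselI2 (Real.sqrt (t ^ 2 - y ^ 2)) +
              besselJ0 (Real.sqrt (t ^ 2 - y ^ 2)) - besselJ2 (Real.sqrt (t ^ 2 - y ^ 2))) -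
          (besselI0 (Real.sqrt (t ^ 2 - y ^ 2)) + besselJ0 (Real.sqrt (t ^ 2 - y ^ 2)))) =
      2 * Real.sinh t + 2 * Real.sin t - 4 * t :=
  integral_u40_general t
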